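/- arXiv:1705.03754 — 5 statements merged into one kernel-verified Lean document; each statement's English description precedes it below -/
import Mathlib

section
/- Finiteness of the inverse language for increasing, finitely co-branching grammars: if f : α → ℕ satisfies f a < f b whenever d a b, and for every b the set {a | d a b} of immediate d-predecessors of b is finite, then for every H the backward-reachable set {K | Relation.ReflTransGen d K H} is finite; in particular the inverse language {K | Relation.ReflTransGen d K H ∧ ∀ K', ¬ d K' K} is finite. (Finiteness part of Theorem 3(4) of the paper.) -/
private lemma reach_finite_aux {α : Type*} (d : α → α → Prop)
    (f : α → ℕ) (hf : ∀ a b, d a b → f a < f b)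
    (hfin : ∀ b, {a | d a b}.Finite) :
    ∀ n H, f H ≤ n → {K | Relation.ReflTransGen d K H}.Finite := by
  intro n
  induction n with
  | zero =>
    intro H hH
    have : {K | Relation.ReflTransGen d K H} ⊆ {H} := by
      intro K hK
      induction hK with
      | refl => rfl
      | tail h hd ih =>
        exact absurd (lt_of_lt_of_le (hf _ _ hd) hH) (Nat.not_lt_zero _)
    exact Set.Finite.subset (Set.finite_singleton H) this
  | succ n ih =>
    intro H hH
    have hsub : {K | Relation.ReflTransGen d K H} ⊆
        insert H (⋃ b ∈ {a | d a H}, {K | Relation.ReflTransGen d K b}) := by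
      intro K hK
      rcases (Relation.reflTransGen_iff_eq_or_transGen.mp hK) with rfl | htg
      · exact Set.mem_insert _ _
      · cases htg with
        | single h =>
          exact Set.mem_insert_of_mem _ (Set.mem_biUnion h Relation.ReflTransGen.refl)
        | tail h hd =>
          exact Set.mem_insert_of_mem _ (Set.mem_biUnion hd h.to_reflTransGen)
    refine Set.Finite.subset ?_ hsub
    refine Set.Finite.insert _ (Set.Finite.biUnion (hfin H) ?_)
    intro b hb
    exact ih b (Nat.lt_succ_iff.mp (lt_of_lt_of_le (hf _ _ hb) hH))

/-- Theorem 3(4), finiteness: for increasing, finitely co-branching grammars the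
backward-reachable set is finite, and in particular the inverse language is finite. -/
theorem inverse_lang_finite {α : Type*} (d : α → α → Prop)
    (f : α → ℕ) (hf : ∀ a b, d a b → f a < f b)
    (hfin : ∀ b, {a | d a b}.Finite) (H : α) :
    {K | Relation.ReflTransGen d K H}.Finite ∧
    {K | Relation.ReflTransGen d K H ∧ ∀ K', ¬ d K' K}.Finite := by
  have h1 := reach_finite_aux d f hf hfin (f H) H le_rfl
  exact ⟨h1, h1.subset fun K hK => hK.1⟩
end

section
/- Languages of distinct fully abstract elements are disjoint under backward confluence: assume t-elements are d-terminal (∀ R, t R → ∀ S, ¬ d R S) and d is backward confluent (for every H there is exactly one fully abstract K with Relation.ReflTransGen d K H). Then for all fully abstract H and K (i.e. having no d-predecessor), the intersection L(H) ∩ L(K) is non-empty if and only if H = K and L(H) is non-empty. (Theorem 10 of the paper, with the non-emptiness of L(H) made explicit for the backward implication.) -/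
/-- Theorem 10: under backward confluence, languages of distinct fully abstract
elements are disjoint. -/
theorem lang_inter_nonempty_iff {α : Type*} (d : α → α → Prop) (t : α → Prop)
    (hterm : ∀ R, t R → ∀ S, ¬ d R S)
    (hbc : ∀ H : α, ∃! K : α, (∀ K', ¬ d K' K) ∧ Relation.ReflTransGen d K H)
    (H K : α) (hH : ∀ K', ¬ d K' H) (hK : ∀ K', ¬ d K' K) :
    ({R | Relation.ReflTransGen d H R ∧ t R} ∩ {R | Relation.ReflTransGen d K R ∧ t R}).Nonempty
      ↔ H = K ∧ {R | Relation.ReflTransGen d H R ∧ t R}.Nonempty := by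
  constructor
  · rintro ⟨R, ⟨hHR, htR⟩, ⟨hKR, _⟩⟩
    obtain ⟨K0, _, huniq⟩ := hbc R
    have h1 := huniq H ⟨hH, hHR⟩
    have h2 := huniq K ⟨hK, hKR⟩
    exact ⟨h1.trans h2.symm, ⟨R, hHR, htR⟩⟩
  · rintro ⟨rfl, ⟨R, hR⟩⟩
    exact ⟨R, hR, hR⟩
end

section
/- Characterization of language inclusion for backward confluent increasing grammars: assume t-elements are d-terminal (∀ R, t R → ∀ S, ¬ d R S), there is f : α → ℕ with f a < f b whenever d a b, and d is backward confluent (for every H there is exactly one fully abstract K with Relation.ReflTransGen d K H). Then for every H and every fully abstract K: L(H) ⊆ L(K) if and only if Relation.ReflTransGen d K H or L(H) = ∅. (This is the mathematical content of Theorem 4 of the paper, by which language inclusion L_G(H) ⊆ L_G(K) is decidable for backward confluent IGs.) -/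
/-- Theorem 4: characterization of language inclusion for backward confluent
increasing grammars. -/
theorem lang_subset_iff {α : Type*} (d : α → α → Prop) (t : α → Prop)
    (hterm : ∀ R, t R → ∀ S, ¬ d R S)
    (f : α → ℕ) (hf : ∀ a b, d a b → f a < f b)
    (hbc : ∀ H : α, ∃! K : α, (∀ K', ¬ d K' K) ∧ Relation.ReflTransGen d K H)
    (H K : α) (hK : ∀ K', ¬ d K' K) :
    {R | Relation.ReflTransGen d H R ∧ t R} ⊆ {R | Relation.ReflTransGen d K R ∧ t R}
      ↔ Relation.ReflTransGen d K H ∨ {R | Relation.ReflTransGen d H R ∧ t R} = ∅ := by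
  constructor
  · intro hsub
    by_cases h : ∃ R, Relation.ReflTransGen d H R ∧ t R
    · left
      obtain ⟨R, hHR, htR⟩ := h
      obtain ⟨hKR, -⟩ := hsub ⟨hHR, htR⟩
      obtain ⟨K0, ⟨hK0fa, hK0H⟩, -⟩ := hbc H
      have hEq : K0 = K :=
        (hbc R).unique ⟨hK0fa, hK0H.trans hHR⟩ ⟨hK, hKR⟩
      exact hEq ▸ hK0H
    · right
      ext R
      simp only [Set.mem_setOf_eq, Set.mem_empty_iff_false, iff_false]
      exact fun hR => h ⟨R, hR⟩
  · rintro (hKH | hempty)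
    · rintro R ⟨hHR, htR⟩
      exact ⟨hKH.trans hHR, htR⟩
    · intro R hR
      rw [hempty] at hR
      exact absurd hR (Set.notMem_empty R)
end

section
/- Orthogonality of grammar derivations and global index derivations: let a, b : α → α → Prop satisfy the one-step commutation property ∀ x y z, a x y → b y z → ∃ w, b x w ∧ a w z. Then for all x, y: Relation.ReflTransGen (fun u v => a u v ∨ b u v) x y holds if and only if there exists z with Relation.ReflTransGen b x z and Relation.ReflTransGen a z y. (Theorem 5 of the paper: H (⇒_G ∪ ⇒_C)* K if and only if H (⇒_C* ; ⇒_G*) K.) -/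
/-!
Each `b`-step occurring after a run of `a`-steps can be pushed in front of the whole run, one
`a`-step at a time by the commutation hypothesis. Reading a mixed derivation from left to right
and keeping it in the normal form `b* ; a*`, an `a`-step is appended to the `a*` part and a
`b`-step is pushed through the `a*` part into the `b*` part. The converse inclusion is immediate.
-/

namespace Relation

variable {α : Type*} {a b : α → α → Prop}

theorem ReflTransGen.exists_step_reflTransGen_of_commute
    (hcomm : ∀ x y z, a x y → b y z → ∃ w, b x w ∧ a w z)
    {x y z : α} (h : ReflTransGen a x y) (hb : b y z) :
    ∃ w, b x w ∧ ReflTransGen a w z := by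
  induction h generalizing z with
  | refl => exact ⟨z, hb, .refl⟩
  | tail _ hstep ih =>
    obtain ⟨w', hbw', haw'⟩ := hcomm _ _ _ hstep hb
    obtain ⟨w, hbw, haw⟩ := ih hbw'
    exact ⟨w, hbw, haw.tail haw'⟩

theorem ReflTransGen.exists_reflTransGen_reflTransGen_of_or
    (hcomm : ∀ x y z, a x y → b y z → ∃ w, b x w ∧ a w z)
    {x y : α} (h : ReflTransGen (fun u v => a u v ∨ b u v) x y) :
    ∃ z, ReflTransGen b x z ∧ ReflTransGen a z y := by
  induction h with
  | refl => exact ⟨x, .refl, .refl⟩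
  | tail _ hstep ih =>
    obtain ⟨z, hbz, haz⟩ := ih
    rcases hstep with ha | hb
    · exact ⟨z, hbz, haz.tail ha⟩
    · obtain ⟨w, hbw, haw⟩ := haz.exists_step_reflTransGen_of_commute hcomm hb
      exact ⟨w, hbz.tail hbw, haw⟩

theorem ReflTransGen.or_of_reflTransGen_reflTransGen {x y z : α}
    (hb : ReflTransGen b x z) (ha : ReflTransGen a z y) :
    ReflTransGen (fun u v => a u v ∨ b u v) x y :=
  (ReflTransGen.mono (fun _ _ => Or.inr) _ _ hb).trans
    (ReflTransGen.mono (fun _ _ => Or.inl) _ _ ha)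

end Relation

/-- Theorem 5: orthogonality of grammar derivations and global index derivations. -/
theorem union_derive_iff_seq {α : Type*} (a b : α → α → Prop)
    (hcomm : ∀ x y z, a x y → b y z → ∃ w, b x w ∧ a w z)
    (x y : α) :
    Relation.ReflTransGen (fun u v => a u v ∨ b u v) x y
      ↔ ∃ z, Relation.ReflTransGen b x z ∧ Relation.ReflTransGen a z y :=
  ⟨Relation.ReflTransGen.exists_reflTransGen_reflTransGen_of_or hcomm,
    fun ⟨_, hb, ha⟩ => hb.or_of_reflTransGen_reflTransGen ha⟩
end

section
/- Galois connection for backward confluent grammars: assume t-elements are d-terminal (∀ R, t R → ∀ S, ¬ d R S), and let r : α → α be a root map, i.e. for every H, Relation.ReflTransGen d (r H) H and r H has no d-predecessor, and moreover r H is unique: every K with Relation.ReflTransGen d K H that has no d-predecessor equals r H (backward confluence). Then for every set S ⊆ {c | t c} of concrete elements and every set T of fully abstract elements: (⋃ c ∈ S, L (r c)) ⊆ (⋃ a ∈ T, L a) if and only if S ⊆ ⋃ a ∈ T, L a; that is, the abstraction S ↦ r '' S and the concretization T ↦ ⋃ a ∈ T, L a form a Galois connection between the concrete domain ordered by inclusion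 and the abstract domain ordered by inclusion of concretizations. -/
/-- Galois connection for backward confluent grammars: abstraction via the unique
fully abstract root and concretization via the language form a Galois connection. -/
theorem galois_connection_abs_con {α : Type*} (d : α → α → Prop) (t : α → Prop)
    (hterm : ∀ R, t R → ∀ S, ¬ d R S)
    (r : α → α)
    (hr1 : ∀ H, Relation.ReflTransGen d (r H) H)
    (hr2 : ∀ H K', ¬ d K' (r H))
    (hr3 : ∀ H K, Relation.ReflTransGen d K H → (∀ K', ¬ d K' K) → K = r H)
    (S : Set α) (hS : S ⊆ {c | t c})
    (T : Set α) (hT : ∀ a ∈ T, ∀ K', ¬ d K' a) :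
    (⋃ c ∈ S, {R | Relation.ReflTransGen d (r c) R ∧ t R})
        ⊆ (⋃ a ∈ T, {R | Relation.ReflTransGen d a R ∧ t R})
      ↔ S ⊆ ⋃ a ∈ T, {R | Relation.ReflTransGen d a R ∧ t R} := by
  constructor
  · intro h c hc
    exact h (Set.mem_biUnion hc ⟨hr1 c, hS hc⟩)
  · intro h R hR
    simp only [Set.mem_iUnion, Set.mem_setOf_eq] at hR
    obtain ⟨c, hc, hrc, htR⟩ := hR
    have := h hc
    simp only [Set.mem_iUnion, Set.mem_setOf_eq] at this
    obtain ⟨a, ha, hac, -⟩ := this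
    have : a = r c := hr3 c a hac (hT a ha)
    exact Set.mem_biUnion ha ⟨this ▸ hrc, htR⟩
end
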